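/- arXiv:1908.07806 — 2 statements merged into one kernel-verified Lean document; each statement's English description precedes it below -/
import Mathlib

section
/- Let A be an N-function, s ∈ (0,1), and define δ(x) = min{1, |x|} for x ∈ ℝ^N. Then ∫_{ℝ^N} A(δ(x)/|x|^s)·|x|^{−N} dx < ∞; that is, the function x ↦ δ(x)/|x|^s belongs to the Orlicz space L_A(ℝ^N, |x|^{−N}dx). -/
open MeasureTheory Filter Set
open scoped ENNReal NNReal RealInnerProductSpace

noncomputable section

/-- An N-function: continuous, convex on `[0,∞)`, positive on `(0,∞)`,
`A t / t → 0` as `t → 0⁺`, `A t / t → ∞` as `t → ∞`, extended evenly to `ℝ`. -/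
structure IsNFunction (A : ℝ → ℝ) : Prop where
  continuous : Continuous A
  convexOn : ConvexOn ℝ (Set.Ici 0) A
  pos : ∀ t > (0:ℝ), 0 < A t
  tendsto_zero : Tendsto (fun t => A t / t) (nhdsWithin 0 (Set.Ioi 0)) (nhds 0)
  tendsto_top : Tendsto (fun t => A t / t) atTop atTop
  even : ∀ t, A (-t) = A t

/-- An N-function together with its right-continuous density `a`,
so that `A t = ∫₀ᵗ a(s) ds`. -/
structure IsNFunctionDeriv (A a : ℝ → ℝ) : Prop where
  toIsNFunction : IsNFunction A
  eq_integral : ∀ t, 0 ≤ t → A t = ∫ s in (0:ℝ)..t, a s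
  monotone : MonotoneOn a (Set.Ici 0)
  rightCont : ∀ t, 0 ≤ t → ContinuousWithinAt a (Set.Ici t) t
  zero : a 0 = 0
  pos : ∀ t > (0:ℝ), 0 < a t
  tendsto_top : Tendsto a atTop atTop

/-- The Luxemburg norm of `u` on `Ω`. -/
def luxNorm {N : ℕ} (A : ℝ → ℝ) (Ω : Set (EuclideanSpace ℝ (Fin N)))
    (u : EuclideanSpace ℝ (Fin N) → ℝ) : ℝ :=
  sInf {lam : ℝ | 0 < lam ∧ ∫⁻ x in Ω, ENNReal.ofReal (A (|u x| / lam)) ≤ 1}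

/-- Membership in the Orlicz space `L_A(Ω)`. -/
def MemLA {N : ℕ} (A : ℝ → ℝ) (Ω : Set (EuclideanSpace ℝ (Fin N)))
    (u : EuclideanSpace ℝ (Fin N) → ℝ) : Prop :=
  Measurable u ∧ ∃ lam > (0:ℝ), ∫⁻ x in Ω, ENNReal.ofReal (A (lam * |u x|)) < ⊤

/-- The Gagliardo-type modular `∫_Ω∫_Ω A(|u x - u y|/|x-y|^s) |x-y|^{-N} dx dy`. -/
def gaglModular {N : ℕ} (A : ℝ → ℝ) (s : ℝ) (Ω : Set (EuclideanSpace ℝ (Fin N)))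
    (u : EuclideanSpace ℝ (Fin N) → ℝ) : ℝ≥0∞ :=
  ∫⁻ x in Ω, ∫⁻ y in Ω,
    ENNReal.ofReal (A (|u x - u y| / ‖x - y‖ ^ s) / ‖x - y‖ ^ N)

/-- The Gagliardo seminorm `[u]_{s,A}`. -/
def gaglSeminorm {N : ℕ} (A : ℝ → ℝ) (s : ℝ) (Ω : Set (EuclideanSpace ℝ (Fin N)))
    (u : EuclideanSpace ℝ (Fin N) → ℝ) : ℝ :=
  sInf {lam : ℝ | 0 < lam ∧ ∫⁻ x in Ω, ∫⁻ y in Ω,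
    ENNReal.ofReal (A (|u x - u y| / (lam * ‖x - y‖ ^ s)) / ‖x - y‖ ^ N) ≤ 1}

/-- Membership in the fractional Orlicz–Sobolev space `W^s L_A(Ω)`. -/
def MemWsLA {N : ℕ} (A : ℝ → ℝ) (s : ℝ) (Ω : Set (EuclideanSpace ℝ (Fin N)))
    (u : EuclideanSpace ℝ (Fin N) → ℝ) : Prop :=
  MemLA A Ω u ∧ ∃ lam > (0:ℝ), (∫⁻ x in Ω, ∫⁻ y in Ω,
    ENNReal.ofReal (A (lam * |u x - u y| / ‖x - y‖ ^ s) / ‖x - y‖ ^ N)) < ⊤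

/-- The norm `‖u‖_{s,A} = ‖u‖_A + [u]_{s,A}` of `W^s L_A(Ω)`. -/
def fracNorm {N : ℕ} (A : ℝ → ℝ) (s : ℝ) (Ω : Set (EuclideanSpace ℝ (Fin N)))
    (u : EuclideanSpace ℝ (Fin N) → ℝ) : ℝ :=
  luxNorm A Ω u + gaglSeminorm A s Ω u

/-- Membership in `W^s_0 L_A(Ω)`: member of `W^s L_A(ℝ^N)` vanishing a.e. outside `Ω`. -/
def MemW0 {N : ℕ} (A : ℝ → ℝ) (s : ℝ) (Ω : Set (EuclideanSpace ℝ (Fin N)))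
    (u : EuclideanSpace ℝ (Fin N) → ℝ) : Prop :=
  MemWsLA A s Set.univ u ∧ ∀ᵐ x, x ∉ Ω → u x = 0

/-- The set of values `t a(t) / A(t)` for `t > 0`; `p₀` is its `sInf`, `p⁰` its `sSup`. -/
def ratioSet (A a : ℝ → ℝ) : Set ℝ := {r | ∃ t, 0 < t ∧ r = t * a t / A t}

/-- `Ω` has Lipschitz (C^{0,1}) boundary: near each boundary point, `Ω` is the
subgraph of a Lipschitz function in a suitable direction. -/
def HasLipschitzBoundary {N : ℕ} (Ω : Set (EuclideanSpace ℝ (Fin N))) : Prop :=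
  ∀ x ∈ frontier Ω, ∃ U : Set (EuclideanSpace ℝ (Fin N)), IsOpen U ∧ x ∈ U ∧
    ∃ (v : EuclideanSpace ℝ (Fin N)) (φ : EuclideanSpace ℝ (Fin N) → ℝ) (K : ℝ≥0),
      ‖v‖ = 1 ∧ LipschitzWith K φ ∧
      Ω ∩ U = {y | y ∈ U ∧ (inner ℝ y v : ℝ) < φ (y - (inner ℝ y v : ℝ) • v)}

/-! Convexity and `A 0 = 0` give `A t ≤ t A(1)` for `t ∈ [0,1]`, and `min(1,|x|)/|x|^s ≤ 1`, so the
integrand is at most `A(1) min(1,|x|) |x|^(-N-s)`. In polar coordinates this becomes a multiple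
of `∫₀^∞ min(1,r) r^(-1-s) dr`, which converges at `0` because `s < 1` and at `∞` because
`s > 0`. -/

open Topology

namespace IsNFunction

variable {A : ℝ → ℝ}

theorem map_zero (hA : IsNFunction A) : A 0 = 0 := by
  have hlim : Tendsto (fun t => A t / t * t) (𝓝[>] 0) (𝓝 0) := by
    simpa using hA.tendsto_zero.mul (tendsto_nhdsWithin_of_tendsto_nhds tendsto_id)
  refine tendsto_nhds_unique (hA.continuous.tendsto 0 |>.mono_left nhdsWithin_le_nhds)
    (hlim.congr' ?_)
  filter_upwards [self_mem_nhdsWithin] with t (ht : 0 < t)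
  exact div_mul_cancel₀ _ ht.ne'

theorem nonneg (hA : IsNFunction A) (t : ℝ) : 0 ≤ A t := by
  rcases lt_trichotomy t 0 with ht | rfl | ht
  · rw [← hA.even]
    exact (hA.pos _ (neg_pos.2 ht)).le
  · exact hA.map_zero.ge
  · exact (hA.pos t ht).le

theorem le_mul_map_one (hA : IsNFunction A) {t : ℝ} (ht₀ : 0 ≤ t) (ht₁ : t ≤ 1) :
    A t ≤ t * A 1 := by
  simpa [hA.map_zero] using hA.convexOn.2 self_mem_Ici (mem_Ici.2 zero_le_one)
    (sub_nonneg.2 ht₁) ht₀ (sub_add_cancel 1 t)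

end IsNFunction

theorem min_one_div_rpow_le_one {s r : ℝ} (hs₀ : 0 ≤ s) (hs₁ : s ≤ 1) (hr : 0 < r) :
    min 1 r / r ^ s ≤ 1 := by
  rw [div_le_one (by positivity)]
  rcases le_total r 1 with h | h
  · simpa [min_eq_right h] using Real.self_le_rpow_of_le_one hr.le h hs₁
  · simpa [min_eq_left h] using Real.one_le_rpow h hs₀

theorem integrableOn_min_one_mul_rpow_Ioi {s : ℝ} (hs₀ : 0 < s) (hs₁ : s < 1) :
    IntegrableOn (fun r : ℝ => min 1 r * r ^ (-1 - s)) (Ioi 0) := by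
  rw [← Ioc_union_Ioi_eq_Ioi zero_le_one]
  refine IntegrableOn.union ?_ ?_
  · have h : IntegrableOn (fun r : ℝ => r ^ (-s)) (Ioc 0 1) := by
      rw [← intervalIntegrable_iff_integrableOn_Ioc_of_le zero_le_one]
      exact intervalIntegral.intervalIntegrable_rpow' (by linarith)
    refine h.congr_fun (fun r hr => ?_) measurableSet_Ioc
    dsimp only
    rw [min_eq_right hr.2, show -s = 1 + (-1 - s) by ring, Real.rpow_add hr.1, Real.rpow_one]
  · refine (integrableOn_Ioi_rpow_of_lt (show -1 - s < -1 by linarith) one_pos).congr_fun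
      (fun r (hr : 1 < r) => ?_) measurableSet_Ioi
    rw [min_eq_left hr.le, one_mul]

theorem lintegral_nFunction_min_one_div_rpow_lt_top {E : Type*} [NormedAddCommGroup E]
    [NormedSpace ℝ E] [FiniteDimensional ℝ E] [Nontrivial E] [MeasurableSpace E] [BorelSpace E]
    (μ : Measure E) [μ.IsAddHaarMeasure] {A : ℝ → ℝ} (hA : IsNFunction A) {s : ℝ}
    (hs : s ∈ Ioo 0 1) :
    ∫⁻ x, ENNReal.ofReal (A (min 1 ‖x‖ / ‖x‖ ^ s) / ‖x‖ ^ Module.finrank ℝ E) ∂μ < ⊤ := by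
  set n := Module.finrank ℝ E
  have hn : 0 < n := Module.finrank_pos
  refine Integrable.lintegral_lt_top <| (integrable_fun_norm_addHaar μ
    (f := fun r => A (min 1 r / r ^ s) / r ^ n)).2 <|
    ((integrableOn_min_one_mul_rpow_Ioi hs.1 hs.2).const_mul (A 1)).mono' ?_ ?_
  · have := hA.continuous.measurable
    exact Measurable.aestronglyMeasurable (by fun_prop)
  · filter_upwards [ae_restrict_mem measurableSet_Ioi] with r (hr : 0 < r)
    have ht₀ : 0 ≤ min 1 r / r ^ s := by positivity
    have hpow : r ^ (n - 1) * r = r ^ n := by rw [← pow_succ, Nat.sub_add_cancel hn]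
    rw [smul_eq_mul, Real.norm_of_nonneg (by have := hA.nonneg (min 1 r / r ^ s); positivity)]
    calc r ^ (n - 1) * (A (min 1 r / r ^ s) / r ^ n)
        ≤ r ^ (n - 1) * (min 1 r / r ^ s * A 1 / r ^ n) := by
          gcongr
          exact hA.le_mul_map_one ht₀ (min_one_div_rpow_le_one hs.1.le hs.2.le hr)
      _ = A 1 * (min 1 r * r ^ (-1 - s)) := by
          rw [show -1 - s = -(1 + s) by ring, Real.rpow_neg hr.le, Real.rpow_add hr,
            Real.rpow_one, ← hpow]
          field_simp

/-- `x ↦ δ(x)/|x|^s` with `δ(x) = min{1,|x|}` belongs to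
`L_A(ℝ^N, |x|^{-N} dx)`. -/
theorem min_one_div_rpow_mem_LA {N : ℕ} (hN : 0 < N)
    (s : ℝ) (hs : s ∈ Set.Ioo (0:ℝ) 1) (A : ℝ → ℝ) (hA : IsNFunction A) :
    (∫⁻ x : EuclideanSpace ℝ (Fin N),
      ENNReal.ofReal (A (min 1 ‖x‖ / ‖x‖ ^ s) / ‖x‖ ^ N)) < ⊤ := by
  have : Nonempty (Fin N) := ⟨⟨0, hN⟩⟩
  simpa using lintegral_nFunction_min_one_div_rpow_lt_top
    (volume : Measure (EuclideanSpace ℝ (Fin N))) hA hs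

end
end

section
/- Let Ω be an open subset of ℝ^N, s ∈ (0,1), and A an N-function with derivative a satisfying 1 < p₀ := inf_{t>0} t·a(t)/A(t) ≤ p⁰ := sup_{t>0} t·a(t)/A(t) < ∞. Set φ(u) = ∫_Ω∫_Ω A(|u(x)−u(y)|/|x−y|^s) dx dy/|x−y|^N. Then for every u ∈ W^sL_A(Ω) with [u]_{s,A} < 1, one has [u]_{s,A}^{p⁰} ≤ φ(u) ≤ [u]_{s,A}^{p₀}. -/
open MeasureTheory Filter Set
open scoped ENNReal NNReal RealInnerProductSpace

noncomputable section

/-!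
The growth condition `p₀ A(t) ≤ t a(t) ≤ p⁰ A(t)` makes `t ↦ A(t) t^(-p₀)` nondecreasing and
`t ↦ A(t) t^(-p⁰)` nonincreasing (compare right derivatives), so
`σ^p⁰ A(t) ≤ A(σ t) ≤ σ^p₀ A(t)` for `0 < σ ≤ 1`. Integrating, the modulars `φ(u / λ)` obey the
same power bounds under `λ ↦ λ / σ`. For `[u] < λ ≤ 1` one has `φ(u / λ) ≤ 1`, hence
`φ(u) ≤ λ^p₀ φ(u / λ) ≤ λ^p₀`; for `0 < λ < [u]` one has `φ(u / λ) > 1`, hence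
`λ^p⁰ ≤ λ^p⁰ φ(u / λ) ≤ φ(u)`. Letting `λ → [u]` gives both bounds.
-/

open Topology

theorem monotoneOn_of_hasDerivWithinAt_Ici_nonneg {D : Set ℝ} (hD : D.OrdConnected)
    {f f' : ℝ → ℝ} (hf : ContinuousOn f D)
    (hf' : ∀ x ∈ D, HasDerivWithinAt f (f' x) (Ici x) x) (hf'₀ : ∀ x ∈ D, 0 ≤ f' x) :
    MonotoneOn f D := by
  intro x hx y hy hxy
  have hsub : Icc x y ⊆ D := hD.out hx hy
  exact image_le_of_deriv_right_le_deriv_boundary continuousOn_const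
    (fun z _ => hasDerivWithinAt_const z _ (f x)) le_rfl (hf.mono hsub)
    (fun z hz => hf' z (hsub (Ico_subset_Icc_self hz)))
    (fun z hz => hf'₀ z (hsub (Ico_subset_Icc_self hz))) ⟨hxy, le_rfl⟩

section PowerGrowth

variable {g g' : ℝ → ℝ} {p σ t : ℝ}

theorem monotoneOn_mul_rpow_neg (hg : ContinuousOn g (Ioi 0))
    (hg' : ∀ y > 0, HasDerivWithinAt g (g' y) (Ici y) y) (hp : ∀ y > 0, p * g y ≤ y * g' y) :
    MonotoneOn (fun y => g y * y ^ (-p)) (Ioi 0) := by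
  refine monotoneOn_of_hasDerivWithinAt_Ici_nonneg ordConnected_Ioi
    (hg.mul (continuousOn_id.rpow_const fun y hy => Or.inl (ne_of_gt hy)))
    (fun y hy => (hg' y hy).mul
      (Real.hasDerivAt_rpow_const (Or.inl (ne_of_gt hy))).hasDerivWithinAt) fun y hy => ?_
  have hy : (0 : ℝ) < y := hy
  have hpow : y ^ (-p) = y * y ^ (-p - 1) := by
    rw [mul_comm, ← Real.rpow_add_one hy.ne']; ring_nf
  calc (0 : ℝ) ≤ (y * g' y - p * g y) * y ^ (-p - 1) :=
        mul_nonneg (sub_nonneg.2 (hp y hy)) (Real.rpow_nonneg hy.le _)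
    _ = g' y * y ^ (-p) + g y * (-p * y ^ (-p - 1)) := by rw [hpow]; ring

theorem MonotoneOn.apply_mul_le_rpow_mul (h : MonotoneOn (fun y => g y * y ^ (-p)) (Ioi 0))
    (hσ : σ ∈ Ioc 0 1) (ht : 0 < t) : g (σ * t) ≤ σ ^ p * g t := by
  have hσt : 0 < σ * t := mul_pos hσ.1 ht
  have hle : g (σ * t) * (σ * t) ^ (-p) ≤ g t * t ^ (-p) :=
    h hσt ht (mul_le_of_le_one_left ht.le hσ.2)
  rw [Real.mul_rpow hσ.1.le ht.le, Real.rpow_neg hσ.1.le, Real.rpow_neg ht.le] at hle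
  have hσp : 0 < σ ^ p := Real.rpow_pos_of_pos hσ.1 p
  have htp : 0 < t ^ p := Real.rpow_pos_of_pos ht p
  calc g (σ * t) = σ ^ p * (g (σ * t) * ((σ ^ p)⁻¹ * (t ^ p)⁻¹)) * t ^ p := by field_simp
    _ ≤ σ ^ p * (g t * (t ^ p)⁻¹) * t ^ p := by gcongr
    _ = σ ^ p * g t := by field_simp

theorem apply_mul_le_rpow_mul_of_le_mul_deriv (hg : ContinuousOn g (Ioi 0))
    (hg' : ∀ y > 0, HasDerivWithinAt g (g' y) (Ici y) y) (hp : ∀ y > 0, p * g y ≤ y * g' y)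
    (hσ : σ ∈ Ioc 0 1) (ht : 0 < t) : g (σ * t) ≤ σ ^ p * g t :=
  (monotoneOn_mul_rpow_neg hg hg' hp).apply_mul_le_rpow_mul hσ ht

theorem rpow_mul_le_apply_mul_of_mul_deriv_le (hg : ContinuousOn g (Ioi 0))
    (hg' : ∀ y > 0, HasDerivWithinAt g (g' y) (Ici y) y) (hp : ∀ y > 0, y * g' y ≤ p * g y)
    (hσ : σ ∈ Ioc 0 1) (ht : 0 < t) : σ ^ p * g t ≤ g (σ * t) := by
  have := apply_mul_le_rpow_mul_of_le_mul_deriv hg.neg (fun y hy => (hg' y hy).neg)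
    (fun y hy => by have := hp y hy; simp only [Pi.neg_apply]; linarith) hσ ht
  simp only [Pi.neg_apply, mul_neg] at this
  linarith

end PowerGrowth

namespace IsNFunctionDeriv

variable {A a : ℝ → ℝ} {p σ t : ℝ}

theorem apply_zero (h : IsNFunctionDeriv A a) : A 0 = 0 := by
  simpa using h.eq_integral 0 le_rfl

theorem hasDerivWithinAt_Ici (h : IsNFunctionDeriv A a) {y : ℝ} (hy : 0 ≤ y) :
    HasDerivWithinAt A (a y) (Ici y) y := by
  have hint : ∀ b ≥ 0, IntervalIntegrable a volume 0 b := fun b hb =>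
    (h.monotone.mono fun x hx => by rw [uIcc_of_le hb] at hx; exact hx.1).intervalIntegrable
  have hmeas : StronglyMeasurableAtFilter a (𝓝[>] y) :=
    ⟨Ioc y (y + 1), Ioc_mem_nhdsGT (lt_add_one y), (hint (y + 1) (by linarith)).1.mono_set
      (Ioc_subset_Ioc_left hy) |>.aestronglyMeasurable⟩
  exact (intervalIntegral.integral_hasDerivWithinAt_right (hint y hy) hmeas
    ((h.rightCont y hy).mono Ioi_subset_Ici_self)).congr
    (fun x hx => h.eq_integral x (hy.trans hx)) (h.eq_integral y hy)

theorem bddBelow_ratioSet (h : IsNFunctionDeriv A a) : BddBelow (ratioSet A a) := by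
  refine ⟨0, ?_⟩
  rintro r ⟨t, ht, rfl⟩
  have := h.pos t ht
  have := h.toIsNFunction.pos t ht
  positivity

theorem sInf_ratioSet_mul_le (h : IsNFunctionDeriv A a) {y : ℝ} (hy : 0 < y) :
    sInf (ratioSet A a) * A y ≤ y * a y :=
  (le_div_iff₀ (h.toIsNFunction.pos y hy)).1 (csInf_le h.bddBelow_ratioSet ⟨y, hy, rfl⟩)

theorem mul_le_sSup_ratioSet_mul (h : IsNFunctionDeriv A a) (hbdd : BddAbove (ratioSet A a))
    {y : ℝ} (hy : 0 < y) : y * a y ≤ sSup (ratioSet A a) * A y :=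
  (div_le_iff₀ (h.toIsNFunction.pos y hy)).1 (le_csSup hbdd ⟨y, hy, rfl⟩)

theorem apply_mul_le_rpow_mul (h : IsNFunctionDeriv A a) (hp : ∀ y > 0, p * A y ≤ y * a y)
    (hσ : σ ∈ Ioc 0 1) (ht : 0 ≤ t) : A (σ * t) ≤ σ ^ p * A t := by
  rcases ht.eq_or_lt with rfl | ht
  · simp [h.apply_zero]
  · exact apply_mul_le_rpow_mul_of_le_mul_deriv h.toIsNFunction.continuous.continuousOn
      (fun y hy => h.hasDerivWithinAt_Ici hy.le) hp hσ ht

theorem rpow_mul_le_apply_mul (h : IsNFunctionDeriv A a) (hp : ∀ y > 0, y * a y ≤ p * A y)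
    (hσ : σ ∈ Ioc 0 1) (ht : 0 ≤ t) : σ ^ p * A t ≤ A (σ * t) := by
  rcases ht.eq_or_lt with rfl | ht
  · simp [h.apply_zero]
  · exact rpow_mul_le_apply_mul_of_mul_deriv_le h.toIsNFunction.continuous.continuousOn
      (fun y hy => h.hasDerivWithinAt_Ici hy.le) hp hσ ht

end IsNFunctionDeriv

section Luxemburg

variable {M : ℝ → ℝ≥0∞} {p : ℝ}

theorem antitoneOn_of_div_le_rpow_mul (hp : 0 ≤ p)
    (hM : ∀ ν > 0, ∀ σ ∈ Ioc (0 : ℝ) 1, M (ν / σ) ≤ ENNReal.ofReal (σ ^ p) * M ν) :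
    AntitoneOn M (Ioi 0) := by
  intro ν (hν : 0 < ν) μ (hμ : 0 < μ) hνμ
  have hσ : ν / μ ∈ Ioc (0 : ℝ) 1 := ⟨div_pos hν hμ, (div_le_one hμ).2 hνμ⟩
  calc M μ = M (ν / (ν / μ)) := by rw [div_div_cancel₀ hν.ne']
    _ ≤ ENNReal.ofReal ((ν / μ) ^ p) * M ν := hM ν hν _ hσ
    _ ≤ 1 * M ν := by
      gcongr
      exact ENNReal.ofReal_le_one.2 (Real.rpow_le_one hσ.1.le hσ.2 hp)
    _ = M ν := one_mul _

theorem exists_pos_le_one_of_div_le_rpow_mul (hp : 0 < p)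
    (hM : ∀ ν > 0, ∀ σ ∈ Ioc (0 : ℝ) 1, M (ν / σ) ≤ ENNReal.ofReal (σ ^ p) * M ν)
    (hfin : ∃ ν > 0, M ν ≠ ⊤) : ∃ lam > 0, M lam ≤ 1 := by
  obtain ⟨ν, hν, hMν⟩ := hfin
  have hlim : Tendsto (fun σ : ℝ => ENNReal.ofReal (σ ^ p) * M ν) (𝓝[>] 0) (𝓝 0) := by
    have hpow : Tendsto (fun σ : ℝ => σ ^ p) (𝓝[>] 0) (𝓝 0) := by
      simpa [Real.zero_rpow hp.ne'] using
        (Real.continuousAt_rpow_const 0 p (Or.inr hp.le)).tendsto.mono_left nhdsWithin_le_nhds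
    simpa using ENNReal.Tendsto.mul_const (ENNReal.tendsto_ofReal hpow) (Or.inr hMν)
  obtain ⟨σ, hσ1, hσ⟩ :=
    ((hlim.eventually (gt_mem_nhds zero_lt_one)).and (Ioc_mem_nhdsGT zero_lt_one)).exists
  exact ⟨ν / σ, div_pos hν hσ.1, (hM ν hν σ hσ).trans hσ1.le⟩

theorem le_rpow_sInf_of_div_le_rpow_mul (hp : 0 < p)
    (hM : ∀ ν > 0, ∀ σ ∈ Ioc (0 : ℝ) 1, M (ν / σ) ≤ ENNReal.ofReal (σ ^ p) * M ν)
    (hfin : ∃ ν > 0, M ν ≠ ⊤) (hlt : sInf {lam | 0 < lam ∧ M lam ≤ 1} < 1) :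
    M 1 ≤ ENNReal.ofReal (sInf {lam | 0 < lam ∧ M lam ≤ 1} ^ p) := by
  set L := sInf {lam | 0 < lam ∧ M lam ≤ 1}
  obtain ⟨lam₀, hlam₀⟩ := exists_pos_le_one_of_div_le_rpow_mul hp hM hfin
  have hbound : ∀ lam ∈ Ioo L 1, M 1 ≤ ENNReal.ofReal (lam ^ p) := by
    rintro lam ⟨hL, hlam1⟩
    obtain ⟨m, ⟨hm, hMm⟩, hmlam⟩ := exists_lt_of_csInf_lt ⟨lam₀, hlam₀⟩ hL
    have hlam : 0 < lam := hm.trans hmlam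
    calc M 1 = M (lam / lam) := by rw [div_self hlam.ne']
      _ ≤ ENNReal.ofReal (lam ^ p) * M lam := hM lam hlam lam ⟨hlam, hlam1.le⟩
      _ ≤ ENNReal.ofReal (lam ^ p) * 1 := by
        gcongr
        exact (antitoneOn_of_div_le_rpow_mul hp.le hM hm hlam hmlam.le).trans hMm
      _ = ENNReal.ofReal (lam ^ p) := mul_one _
  have hcont : Tendsto (fun lam : ℝ => ENNReal.ofReal (lam ^ p)) (𝓝[>] L)
      (𝓝 (ENNReal.ofReal (L ^ p))) :=
    (ENNReal.tendsto_ofReal (Real.continuousAt_rpow_const L p (Or.inr hp.le)).tendsto).mono_left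
      nhdsWithin_le_nhds
  exact ge_of_tendsto hcont (eventually_of_mem (Ioo_mem_nhdsGT hlt) hbound)

theorem rpow_sInf_le_of_rpow_mul_le_div (hp : 0 < p)
    (hM : ∀ ν > 0, ∀ σ ∈ Ioc (0 : ℝ) 1, ENNReal.ofReal (σ ^ p) * M ν ≤ M (ν / σ))
    (hlt : sInf {lam | 0 < lam ∧ M lam ≤ 1} < 1) :
    ENNReal.ofReal (sInf {lam | 0 < lam ∧ M lam ≤ 1} ^ p) ≤ M 1 := by
  set L := sInf {lam | 0 < lam ∧ M lam ≤ 1}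
  have hL₀ : 0 ≤ L := Real.sInf_nonneg fun _ hlam => hlam.1.le
  rcases hL₀.eq_or_lt with hL | hL
  · rw [← hL, Real.zero_rpow hp.ne', ENNReal.ofReal_zero]; exact zero_le
  have hbound : ∀ lam ∈ Ioo 0 L, ENNReal.ofReal (lam ^ p) ≤ M 1 := by
    rintro lam ⟨hlam, hlamL⟩
    have hMlam : 1 < M lam := by
      by_contra! hle
      exact notMem_of_lt_csInf hlamL ⟨0, fun _ h => h.1.le⟩ ⟨hlam, hle⟩
    calc ENNReal.ofReal (lam ^ p) = ENNReal.ofReal (lam ^ p) * 1 := (mul_one _).symm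
      _ ≤ ENNReal.ofReal (lam ^ p) * M lam := by gcongr
      _ ≤ M (lam / lam) := hM lam hlam lam ⟨hlam, (hlamL.trans hlt).le⟩
      _ = M 1 := by rw [div_self hlam.ne']
  have hcont : Tendsto (fun lam : ℝ => ENNReal.ofReal (lam ^ p)) (𝓝[<] L)
      (𝓝 (ENNReal.ofReal (L ^ p))) :=
    (ENNReal.tendsto_ofReal (Real.continuousAt_rpow_const L p (Or.inr hp.le)).tendsto).mono_left
      nhdsWithin_le_nhds
  exact le_of_tendsto hcont (eventually_of_mem (Ioo_mem_nhdsLT hL) hbound)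

end Luxemburg

theorem div_div_mul_eq_mul_div_mul (a b c d : ℝ) : a / (b / c * d) = c * (a / (b * d)) := by
  rw [div_mul_eq_mul_div, div_div_eq_mul_div, mul_comm a, mul_div_assoc]

/-- The modular `φ(u / lam)`; `gaglSeminorm A s Ω u` is definitionally
`sInf {lam | 0 < lam ∧ gaglModularDiv A s Ω u lam ≤ 1}`. -/
def gaglModularDiv {N : ℕ} (A : ℝ → ℝ) (s : ℝ) (Ω : Set (EuclideanSpace ℝ (Fin N)))
    (u : EuclideanSpace ℝ (Fin N) → ℝ) (lam : ℝ) : ℝ≥0∞ :=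
  ∫⁻ x in Ω, ∫⁻ y in Ω,
    ENNReal.ofReal (A (|u x - u y| / (lam * ‖x - y‖ ^ s)) / ‖x - y‖ ^ N)

section Gagliardo

variable {N : ℕ} {A : ℝ → ℝ} {s : ℝ} {Ω : Set (EuclideanSpace ℝ (Fin N))}
  {u : EuclideanSpace ℝ (Fin N) → ℝ}

theorem gaglModularDiv_one : gaglModularDiv A s Ω u 1 = gaglModular A s Ω u := by
  simp only [gaglModularDiv, gaglModular, one_mul]

theorem MemWsLA.exists_gaglModularDiv_ne_top (hu : MemWsLA A s Ω u) :
    ∃ ν > 0, gaglModularDiv A s Ω u ν ≠ ⊤ := by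
  obtain ⟨lam, hlam, hfin⟩ := hu.2
  refine ⟨lam⁻¹, inv_pos.2 hlam, ne_of_lt (lt_of_eq_of_lt ?_ hfin)⟩
  refine lintegral_congr fun x => lintegral_congr fun y => ?_
  rw [inv_mul_eq_div, div_div_eq_mul_div, mul_comm]

theorem gaglModularDiv_div_le {c σ ν : ℝ} (hc : 0 ≤ c) (hν : 0 ≤ ν)
    (hA : ∀ t ≥ 0, A (σ * t) ≤ c * A t) :
    gaglModularDiv A s Ω u (ν / σ) ≤ ENNReal.ofReal c * gaglModularDiv A s Ω u ν := by
  rw [gaglModularDiv, gaglModularDiv, ← lintegral_const_mul' _ _ ENNReal.ofReal_ne_top]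
  refine lintegral_mono fun x => ?_
  rw [← lintegral_const_mul' _ _ ENNReal.ofReal_ne_top]
  refine lintegral_mono fun y => ?_
  rw [div_div_mul_eq_mul_div_mul, ← ENNReal.ofReal_mul hc, ← mul_div_assoc c]
  gcongr
  exact hA _ (by positivity)

theorem le_gaglModularDiv_div {c σ ν : ℝ} (hc : 0 ≤ c) (hν : 0 ≤ ν)
    (hA : ∀ t ≥ 0, c * A t ≤ A (σ * t)) :
    ENNReal.ofReal c * gaglModularDiv A s Ω u ν ≤ gaglModularDiv A s Ω u (ν / σ) := by
  rw [gaglModularDiv, gaglModularDiv, ← lintegral_const_mul' _ _ ENNReal.ofReal_ne_top]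
  refine lintegral_mono fun x => ?_
  rw [← lintegral_const_mul' _ _ ENNReal.ofReal_ne_top]
  refine lintegral_mono fun y => ?_
  rw [div_div_mul_eq_mul_div_mul, ← ENNReal.ofReal_mul hc, ← mul_div_assoc c]
  gcongr
  exact hA _ (by positivity)

end Gagliardo

theorem modular_bounds_of_seminorm_lt_one_general {N : ℕ}
    (Ω : Set (EuclideanSpace ℝ (Fin N)))
    (s : ℝ) (A a : ℝ → ℝ)
    (hAa : IsNFunctionDeriv A a)
    (hp0 : 1 < sInf (ratioSet A a)) (hbdd : BddAbove (ratioSet A a))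
    (u : EuclideanSpace ℝ (Fin N) → ℝ) (hu : MemWsLA A s Ω u)
    (hlt : gaglSeminorm A s Ω u < 1) :
    ENNReal.ofReal (gaglSeminorm A s Ω u ^ sSup (ratioSet A a)) ≤ gaglModular A s Ω u ∧
      gaglModular A s Ω u ≤
        ENNReal.ofReal (gaglSeminorm A s Ω u ^ sInf (ratioSet A a)) := by
  have hp : 0 < sInf (ratioSet A a) := zero_lt_one.trans hp0
  have hq : 0 < sSup (ratioSet A a) :=
    hp.trans_le (csInf_le_csSup ⟨_, 1, one_pos, rfl⟩ hAa.bddBelow_ratioSet hbdd)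
  rw [← gaglModularDiv_one]
  refine ⟨rpow_sInf_le_of_rpow_mul_le_div hq (fun ν hν σ hσ => ?_) hlt,
    le_rpow_sInf_of_div_le_rpow_mul hp (fun ν hν σ hσ => ?_)
      hu.exists_gaglModularDiv_ne_top hlt⟩
  · exact le_gaglModularDiv_div (Real.rpow_nonneg hσ.1.le _) hν.le fun t ht =>
      hAa.rpow_mul_le_apply_mul (fun y hy => hAa.mul_le_sSup_ratioSet_mul hbdd hy) hσ ht
  · exact gaglModularDiv_div_le (Real.rpow_nonneg hσ.1.le _) hν.le fun t ht =>
      hAa.apply_mul_le_rpow_mul (fun y hy => hAa.sInf_ratioSet_mul_le hy) hσ ht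

/-- if `[u]_{s,A} < 1` then `[u]^{p⁰} ≤ φ(u) ≤ [u]^{p₀}`. -/
theorem modular_bounds_of_seminorm_lt_one {N : ℕ} (hN : 0 < N)
    (Ω : Set (EuclideanSpace ℝ (Fin N))) (hΩ : IsOpen Ω)
    (s : ℝ) (hs : s ∈ Set.Ioo (0:ℝ) 1) (A a : ℝ → ℝ)
    (hAa : IsNFunctionDeriv A a)
    (hp0 : 1 < sInf (ratioSet A a)) (hbdd : BddAbove (ratioSet A a))
    (u : EuclideanSpace ℝ (Fin N) → ℝ) (hu : MemWsLA A s Ω u)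
    (hlt : gaglSeminorm A s Ω u < 1) :
    ENNReal.ofReal (gaglSeminorm A s Ω u ^ sSup (ratioSet A a)) ≤ gaglModular A s Ω u ∧
      gaglModular A s Ω u ≤
        ENNReal.ofReal (gaglSeminorm A s Ω u ^ sInf (ratioSet A a)) :=
  modular_bounds_of_seminorm_lt_one_general Ω s A a hAa hp0 hbdd u hu hlt
end
end
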